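/- Let 0 ≤ q < 1, 0 < p < 1 and ν ∈ ℝ with p = q^ν/(q^ν + q^{-ν}). Define the Markov kernel Π on S = {(y,z) ∈ ℤ² : z ≥ y ≥ 0} by Π((y,z),(y+1,z+1)) = p, Π((y,z),(y,z+1)) = (1-p)q^y, Π((y,z),(y-1,z-1)) = (1-p)(1-q^y), and the kernel Q on ℕ by Q(z,z+1) = (1-q^{z+1})ψ_ν(z+1)/((q^ν+q^{-ν})ψ_ν(z)), Q(z,z-1) = ψ_ν(z-1)/((q^ν+q^{-ν})ψ_ν(z)). Define K(z,(y,z')) = δ_{z,z'} q^{ν(2y-z)} / (ψ_ν(z)(q)_y(q)_{z-y}). Then the intertwining relation Q K = K Π holds, i.e. for all z ∈ ℕ and (y,z') ∈ S: Σ_{z''} Q(z,z'') K(z'',(y,z')) = Σ_{(y'',z'')} K(z,(y'',z'')) Π((y'',z''),(y,z')). -/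

import Mathlib

open Finset

/-- The q-Pochhammer symbol `(q)ₙ = ∏_{k=1}^n (1 - q^k)`. -/
noncomputable def qPochR (q : ℝ) (n : ℕ) : ℝ :=
  ∏ k ∈ Finset.range n, (1 - q ^ (k + 1))

/-- The q-deformed Whittaker function `ψ_ν(z)` (real parameter `ν`),
extended by `0` to negative integers. -/
noncomputable def qWhit (q ν : ℝ) : ℤ → ℝ := fun z =>
  if z < 0 then 0
  else ∑ y ∈ Finset.range (z.toNat + 1),
    Real.rpow q (ν * (2 * (y : ℝ) - (z.toNat : ℝ))) / (qPochR q y * qPochR q (z.toNat - y))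

/-- Transition kernel `Π` on the state space `S = {(y,z) : z ≥ y ≥ 0}`,
extended by zero. -/
noncomputable def PiKer (q p : ℝ) : ℕ × ℕ → ℕ × ℕ → ℝ := fun s t =>
  if t.1 = s.1 + 1 ∧ t.2 = s.2 + 1 then p
  else if t.1 = s.1 ∧ t.2 = s.2 + 1 then (1 - p) * q ^ s.1
  else if t.1 + 1 = s.1 ∧ t.2 + 1 = s.2 then (1 - p) * (1 - q ^ s.1)
  else 0

/-- Transition kernel `Q` on `ℕ`, extended by zero. -/
noncomputable def QKer (q ν : ℝ) : ℕ → ℕ → ℝ := fun z z' =>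
  if z' = z + 1 then
    (1 - q ^ (z + 1)) / (Real.rpow q ν + Real.rpow q (-ν)) * (qWhit q ν (z + 1) / qWhit q ν z)
  else if z' + 1 = z then
    (1 / (Real.rpow q ν + Real.rpow q (-ν))) * (qWhit q ν ((z : ℤ) - 1) / qWhit q ν z)
  else 0

/-- The intertwining kernel `K(z,(y,z')) = δ_{z,z'} q^{ν(2y-z)} / (ψ_ν(z)(q)_y(q)_{z-y})`,
supported on the state space `S`. -/
noncomputable def KKer (q ν : ℝ) : ℕ → ℕ × ℕ → ℝ := fun z yz =>
  if yz.2 = z ∧ yz.1 ≤ z then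
    Real.rpow q (ν * (2 * (yz.1 : ℝ) - (z : ℝ))) /
      (qWhit q ν z * qPochR q yz.1 * qPochR q (z - yz.1))
  else 0

/-! Write `a = q^ν`. Then `q^{-ν} = a⁻¹`, `p = a / (a + a⁻¹)`, `1 - p = a⁻¹ / (a + a⁻¹)` and
`K(z,(y,z)) = a^{2y-z} / (ψ_ν(z) (q)_y (q)_{z-y})`. In both nontrivial entries of `Q K = K Π`
the factors `ψ_ν` cancel (they are positive), the powers of `a` on the two sides agree, and
what remains is a q-binomial identity: the q-Pascal rule
`[z+1, y]_q = [z, y-1]_q + q^y [z, y]_q` for the entry `(y, z+1)`, and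
`(q)_{y+1} = (q)_y (1 - q^{y+1})` for the entry `(y, z-1)`. All other entries vanish. -/

theorem qPochR_succ (q : ℝ) (n : ℕ) : qPochR q (n + 1) = qPochR q n * (1 - q ^ (n + 1)) :=
  prod_range_succ _ _

theorem qPochR_pos {q : ℝ} (hq0 : 0 ≤ q) (hq1 : q < 1) (n : ℕ) : 0 < qPochR q n :=
  prod_pos fun k _ => sub_pos.2 (pow_lt_one₀ hq0 hq1 k.succ_ne_zero)

theorem qPochR_ne_zero {q : ℝ} (hq : ∀ n : ℕ, q ^ (n + 1) ≠ 1) (n : ℕ) : qPochR q n ≠ 0 :=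
  prod_ne_zero_iff.2 fun k _ => sub_ne_zero.2 (hq k).symm

/-- `1 / ((q)_k (q)_{n-k})`, the Gaussian binomial `[n, k]_q` divided by `(q)_n`,
extended by zero to `k > n`. -/
noncomputable def qBinomWeight (q : ℝ) (n k : ℕ) : ℝ :=
  if k ≤ n then (qPochR q k * qPochR q (n - k))⁻¹ else 0

namespace qBinomWeight

variable {q : ℝ}

theorem of_lt {n k : ℕ} (h : n < k) : qBinomWeight q n k = 0 :=
  if_neg h.not_ge

theorem pos (hq0 : 0 ≤ q) (hq1 : q < 1) {n k : ℕ} (h : k ≤ n) : 0 < qBinomWeight q n k := by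
  rw [qBinomWeight, if_pos h]
  exact inv_pos.2 (mul_pos (qPochR_pos hq0 hq1 k) (qPochR_pos hq0 hq1 (n - k)))

theorem one_sub_pow_mul_succ_succ (hq : ∀ n : ℕ, q ^ (n + 1) ≠ 1) (n k : ℕ) :
    (1 - q ^ (k + 1)) * qBinomWeight q (n + 1) (k + 1) = qBinomWeight q n k := by
  by_cases h : k ≤ n
  · have := qPochR_ne_zero hq k
    have := qPochR_ne_zero hq (n - k)
    have := sub_ne_zero.2 (hq k).symm
    rw [qBinomWeight, qBinomWeight, if_pos h, if_pos (by omega), Nat.add_sub_add_right,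
      qPochR_succ]
    field_simp
  · rw [of_lt (by omega), of_lt (by omega), mul_zero]

theorem one_sub_pow_mul_succ_left (hq : ∀ n : ℕ, q ^ (n + 1) ≠ 1) (n k : ℕ) :
    (1 - q ^ (n + 1 - k)) * qBinomWeight q (n + 1) k = qBinomWeight q n k := by
  by_cases h : k ≤ n
  · have := qPochR_ne_zero hq k
    have := qPochR_ne_zero hq (n - k)
    have := sub_ne_zero.2 (hq (n - k)).symm
    rw [qBinomWeight, qBinomWeight, if_pos h, if_pos (by omega),
      show n + 1 - k = n - k + 1 by omega, qPochR_succ]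
    field_simp
  · rw [Nat.sub_eq_zero_of_le (by omega), pow_zero, sub_self, zero_mul, of_lt (by omega)]

theorem pascal (hq : ∀ n : ℕ, q ^ (n + 1) ≠ 1) (n k : ℕ) :
    (1 - q ^ (n + 1)) * qBinomWeight q (n + 1) (k + 1)
      = qBinomWeight q n k + q ^ (k + 1) * qBinomWeight q n (k + 1) := by
  by_cases h : k ≤ n
  · have hsplit : q ^ (n + 1) = q ^ (k + 1) * q ^ (n + 1 - (k + 1)) := by
      rw [← pow_add]; congr 1; omega
    rw [← one_sub_pow_mul_succ_succ hq n k, ← one_sub_pow_mul_succ_left hq n (k + 1), hsplit]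
    ring
  · rw [of_lt (by omega), of_lt (by omega), of_lt (by omega)]
    ring

end qBinomWeight

section Kernels

variable {q ν : ℝ}

theorem qWhit_natCast (hq0 : 0 ≤ q) (n : ℕ) :
    qWhit q ν n = ∑ k ∈ range (n + 1), (q ^ ν) ^ (2 * (k : ℤ) - n) * qBinomWeight q n k := by
  simp only [qWhit, Nat.cast_nonneg, not_lt.2, if_false, Int.toNat_natCast, Real.rpow_eq_pow]
  refine sum_congr rfl fun k hk => ?_
  rw [qBinomWeight, if_pos (Nat.lt_succ_iff.1 (mem_range.1 hk)), ← Real.rpow_mul_intCast hq0]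
  push_cast
  rfl

theorem qWhit_pos (hq0 : 0 ≤ q) (hq1 : q < 1) (ha : 0 < q ^ ν) (n : ℕ) : 0 < qWhit q ν n := by
  rw [qWhit_natCast hq0]
  exact sum_pos (fun k hk => mul_pos (zpow_pos ha _)
    (qBinomWeight.pos hq0 hq1 (Nat.lt_succ_iff.1 (mem_range.1 hk)))) nonempty_range_add_one

theorem KKer_self (hq0 : 0 ≤ q) (z k : ℕ) :
    KKer q ν z (k, z) = (q ^ ν) ^ (2 * (k : ℤ) - z) * qBinomWeight q z k / qWhit q ν z := by
  by_cases h : k ≤ z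
  · simp only [KKer, qBinomWeight, h, and_self, if_true, Real.rpow_eq_pow]
    rw [← Real.rpow_mul_intCast hq0]
    push_cast
    field_simp
  · simp [KKer, qBinomWeight, h]

theorem KKer_of_ne {z z' : ℕ} (h : z' ≠ z) (k : ℕ) : KKer q ν z (k, z') = 0 := by
  simp [KKer, h]

theorem KKer_of_lt {z k : ℕ} (h : z < k) (z' : ℕ) : KKer q ν z (k, z') = 0 := by
  simp [KKer, h.not_ge]

theorem QKer_self_succ (z : ℕ) :
    QKer q ν z (z + 1) = (1 - q ^ (z + 1)) / (q ^ ν + q ^ (-ν)) *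
      (qWhit q ν (z + 1 : ℕ) / qWhit q ν z) := by
  simp [QKer]

theorem QKer_succ_self (z : ℕ) :
    QKer q ν (z + 1) z = (q ^ ν + q ^ (-ν))⁻¹ * (qWhit q ν z / qWhit q ν (z + 1 : ℕ)) := by
  simp [QKer, show z ≠ z + 1 + 1 by omega]

theorem QKer_of_ne {z z' : ℕ} (h₁ : z' ≠ z + 1) (h₂ : z' + 1 ≠ z) : QKer q ν z z' = 0 := by
  simp [QKer, h₁, h₂]

theorem sum_QKer_mul_KKer (z y z' : ℕ) :
    ∑ z'' ∈ range (z + 2), QKer q ν z z'' * KKer q ν z'' (y, z')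
      = QKer q ν z z' * KKer q ν z' (y, z') :=
  sum_eq_single z' (fun _ _ hb => by rw [KKer_of_ne (Ne.symm hb), mul_zero])
    fun h => by rw [QKer_of_ne (by simp at h; omega) (by simp at h; omega), zero_mul]

theorem sum_KKer_mul (z : ℕ) (f : ℕ × ℕ → ℝ) :
    ∑ s ∈ range (z + 1) ×ˢ range (z + 1), KKer q ν z s * f s
      = ∑ k ∈ range (z + 1), KKer q ν z (k, z) * f (k, z) := by
  rw [sum_product]
  exact sum_congr rfl fun k _ => sum_eq_single_of_mem z (self_mem_range_succ z)
    fun _ _ hb => by rw [KKer_of_ne hb, zero_mul]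

end Kernels

section PiKer

variable {q p : ℝ}

theorem PiKer_up_right (k z : ℕ) : PiKer q p (k, z) (k + 1, z + 1) = p := by simp [PiKer]

theorem PiKer_up (k z : ℕ) : PiKer q p (k, z) (k, z + 1) = (1 - p) * q ^ k := by simp [PiKer]

theorem PiKer_down (k z : ℕ) : PiKer q p (k + 1, z + 1) (k, z) = (1 - p) * (1 - q ^ (k + 1)) := by
  simp [PiKer, show z ≠ z + 1 + 1 by omega]

theorem PiKer_up_of_ne {k y : ℕ} (h₁ : y ≠ k + 1) (h₂ : y ≠ k) (z : ℕ) :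
    PiKer q p (k, z) (y, z + 1) = 0 := by
  simp [PiKer, h₁, h₂, show z + 1 + 1 ≠ z by omega]

theorem PiKer_down_of_ne {k y : ℕ} (h : k ≠ y + 1) (z : ℕ) : PiKer q p (k, z + 1) (y, z) = 0 := by
  simp [PiKer, h.symm, show z ≠ z + 1 + 1 by omega]

theorem PiKer_of_ne {z z' : ℕ} (h₁ : z' ≠ z + 1) (h₂ : z' + 1 ≠ z) (k y : ℕ) :
    PiKer q p (k, z) (y, z') = 0 := by
  simp [PiKer, h₁, h₂]

end PiKer

section Balance

variable {q p ν : ℝ}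

theorem QKer_mul_KKer_succ (hq0 : 0 ≤ q) (hq1 : q < 1) (ha : 0 < q ^ ν)
    (hp : p = q ^ ν / (q ^ ν + q ^ (-ν))) (z y : ℕ) :
    QKer q ν z (z + 1) * KKer q ν (z + 1) (y, z + 1)
      = ∑ k ∈ range (z + 1), KKer q ν z (k, z) * PiKer q p (k, z) (y, z + 1) := by
  have hq : ∀ n : ℕ, q ^ (n + 1) ≠ 1 := fun n => (pow_lt_one₀ hq0 hq1 n.succ_ne_zero).ne
  have hψ₀ := (qWhit_pos hq0 hq1 ha z).ne'
  have hψ₁ := (qWhit_pos hq0 hq1 ha (z + 1)).ne'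
  rw [QKer_self_succ, KKer_self hq0]
  rw [Real.rpow_neg hq0] at hp ⊢
  set a := q ^ ν
  have hc : a + a⁻¹ ≠ 0 := by positivity
  cases y with
  | zero =>
    rw [sum_eq_single 0 (fun k _ hk => by rw [PiKer_up_of_ne (by omega) (Ne.symm hk), mul_zero])
      (by simp), PiKer_up, KKer_self hq0,
      ← qBinomWeight.one_sub_pow_mul_succ_left hq z 0, Nat.sub_zero,
      show 2 * ((0 : ℕ) : ℤ) - z = 2 * ((0 : ℕ) : ℤ) - (z + 1 : ℕ) + 1 by push_cast; ring,
      zpow_add_one₀ ha.ne', hp]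
    field_simp
    ring
  | succ j =>
    rw [sum_eq_add j (j + 1) (by omega)
      (fun k _ hk => by rw [PiKer_up_of_ne (by omega) (by omega), mul_zero])
      (fun h => by rw [KKer_of_lt (by simpa using h), zero_mul])
      (fun h => by rw [KKer_of_lt (by simpa using h), zero_mul]),
      PiKer_up_right, PiKer_up, KKer_self hq0, KKer_self hq0,
      show 2 * (j : ℤ) - z = 2 * ((j + 1 : ℕ) : ℤ) - (z + 1 : ℕ) - 1 by push_cast; ring,
      show 2 * ((j + 1 : ℕ) : ℤ) - z = 2 * ((j + 1 : ℕ) : ℤ) - (z + 1 : ℕ) + 1 by push_cast; ring,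
      zpow_add_one₀ ha.ne', zpow_sub_one₀ ha.ne',
      eq_sub_of_add_eq (qBinomWeight.pascal hq z j).symm, hp]
    field_simp
    ring

theorem QKer_succ_mul_KKer (hq0 : 0 ≤ q) (hq1 : q < 1) (ha : 0 < q ^ ν)
    (hp : p = q ^ ν / (q ^ ν + q ^ (-ν))) (z y : ℕ) :
    QKer q ν (z + 1) z * KKer q ν z (y, z)
      = ∑ k ∈ range (z + 2), KKer q ν (z + 1) (k, z + 1) * PiKer q p (k, z + 1) (y, z) := by
  have hq : ∀ n : ℕ, q ^ (n + 1) ≠ 1 := fun n => (pow_lt_one₀ hq0 hq1 n.succ_ne_zero).ne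
  have hψ₀ := (qWhit_pos hq0 hq1 ha z).ne'
  have hψ₁ := (qWhit_pos hq0 hq1 ha (z + 1)).ne'
  rw [sum_eq_single (y + 1) (fun k _ hk => by rw [PiKer_down_of_ne hk, mul_zero])
      (fun h => by rw [KKer_of_lt (by simpa using h), zero_mul]),
    PiKer_down, QKer_succ_self, KKer_self hq0, KKer_self hq0,
    ← qBinomWeight.one_sub_pow_mul_succ_succ hq z y,
    show 2 * ((y + 1 : ℕ) : ℤ) - (z + 1 : ℕ) = 2 * (y : ℤ) - z + 1 by push_cast; ring,
    zpow_add_one₀ ha.ne']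
  rw [Real.rpow_neg hq0] at hp ⊢
  set a := q ^ ν
  have hc : a + a⁻¹ ≠ 0 := by positivity
  rw [hp]
  field_simp
  ring

end Balance

theorem qKernel_intertwining_general (q p ν : ℝ) (hq0 : 0 ≤ q) (hq1 : q < 1)
    (hp0 : 0 < p)
    (hp : p = Real.rpow q ν / (Real.rpow q ν + Real.rpow q (-ν)))
    (z : ℕ) (y z' : ℕ) :
    ∑ z'' ∈ Finset.range (z + 2), QKer q ν z z'' * KKer q ν z'' (y, z')
      = ∑ s ∈ Finset.range (z + 1) ×ˢ Finset.range (z + 1),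
          KKer q ν z s * PiKer q p s (y, z') := by
  have ha : 0 < q ^ ν := (Real.rpow_nonneg hq0 ν).lt_of_ne' fun h => by
    rw [hp, Real.rpow_eq_pow, h, zero_div] at hp0
    exact hp0.false
  rw [sum_QKer_mul_KKer, sum_KKer_mul]
  obtain rfl | hup := eq_or_ne z' (z + 1)
  · exact QKer_mul_KKer_succ hq0 hq1 ha hp z y
  obtain rfl | hdown := eq_or_ne z (z' + 1)
  · exact QKer_succ_mul_KKer hq0 hq1 ha hp z' y
  rw [QKer_of_ne hup (Ne.symm hdown), zero_mul]
  exact (sum_eq_zero fun k _ => by rw [PiKer_of_ne hup (Ne.symm hdown), mul_zero]).symm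

/-- Intertwining relation `Q K = K Π`:
for all `z ∈ ℕ` and `(y,z') ∈ S`,
`Σ_{z''} Q(z,z'') K(z'',(y,z')) = Σ_{(y'',z'')} K(z,(y'',z'')) Π((y'',z''),(y,z'))`,
where the sums range over all states carrying nonzero weight. -/
theorem qKernel_intertwining (q p ν : ℝ) (hq0 : 0 ≤ q) (hq1 : q < 1)
    (hp0 : 0 < p) (hp1 : p < 1)
    (hp : p = Real.rpow q ν / (Real.rpow q ν + Real.rpow q (-ν)))
    (z : ℕ) (y z' : ℕ) (hyz : y ≤ z') :
    ∑ z'' ∈ Finset.range (z + 2), QKer q ν z z'' * KKer q ν z'' (y, z')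
      = ∑ s ∈ Finset.range (z + 1) ×ˢ Finset.range (z + 1),
          KKer q ν z s * PiKer q p s (y, z') :=
  qKernel_intertwining_general q p ν hq0 hq1 hp0 hp z y z'
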